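/- arXiv:2403.18404 — 3 statements merged into one kernel-verified Lean document; each statement's English description precedes it below -/
import Mathlib

section
/- Let M ⊆ 𝕊² be an orthogonal-pair-free set. Define G(M) = ⋃_{y∈M} G(y), M₁ = {z ∈ 𝕊² : G(z) ⊆ G(M)}, and M₂ = M₁ \ G(M). Then M ⊆ M₂ and M₂ is orthogonal-pair-free. -/
open Metric Set MeasureTheory Filter
open scoped ENNReal Topology

noncomputable section

abbrev E3 := EuclideanSpace ℝ (Fin 3)

/-- Real inner product on ℝ³. -/
def rinner (p q : E3) : ℝ := inner ℝ p q

/-- The unit sphere 𝕊² in ℝ³. -/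
def sphere2 : Set E3 := Metric.sphere (0 : E3) 1

def northPole : E3 := EuclideanSpace.single (2 : Fin 3) (1 : ℝ)
def southPole : E3 := EuclideanSpace.single (2 : Fin 3) (-1 : ℝ)

/-- Geodesic distance on the sphere: d(p,q) = arccos⟨p,q⟩. -/
def gdist (p q : E3) : ℝ := Real.arccos (rinner p q)

/-- Geodesic distance from a point to a set. -/
def gdistToSet (y : E3) (B : Set E3) : ℝ := sInf (gdist y '' B)

/-- Open geodesic cap/ball of radius r centered at p. -/
def cap (p : E3) (r : ℝ) : Set E3 := {q ∈ sphere2 | gdist p q < r}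

/-- A set is orthogonal-pair-free if no two distinct points of it are orthogonal. -/
def OPF (A : Set E3) : Prop :=
  ∀ p ∈ A, ∀ q ∈ A, p ≠ q → rinner p q ≠ 0

/-- The minor great-circle arc arc(x,y) = {u/‖u‖ : u ∈ [x,y]}. -/
def arc (x y : E3) : Set E3 := (fun u : E3 => ‖u‖⁻¹ • u) '' segment ℝ x y

/-- Spherical convexity. -/
def SphConvex (S : Set E3) : Prop :=
  ∀ x ∈ S, ∀ y ∈ S, x ≠ -y → arc x y ⊆ S

/-- The surface measure σ on 𝕊² (2-dimensional Hausdorff measure, σ(𝕊²) = 4π). -/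
def sigmaM : Measure E3 := MeasureTheory.Measure.hausdorffMeasure 2

/-- The normalized surface measure μ, μ(𝕊²) = 1. -/
def muS : Measure E3 := (ENNReal.ofReal (4 * Real.pi))⁻¹ • sigmaM

/-- 𝒜: orthogonal-pair-free subsets of 𝕊² that are finite unions of pairwise
mutually disjoint (disjoint closures) spherically convex sets. -/
def memA (S : Set E3) : Prop :=
  S ⊆ sphere2 ∧ OPF S ∧
  ∃ (n : ℕ) (C : Fin n → Set E3),
    (∀ i, C i ⊆ sphere2 ∧ SphConvex (C i)) ∧
    (Pairwise fun i j => closure (C i) ∩ closure (C j) = ∅) ∧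
    S = ⋃ i, C i

/-- 𝒜ₖ: as 𝒜 but with at most k convex pieces. -/
def memAk (k : ℕ) (S : Set E3) : Prop :=
  S ⊆ sphere2 ∧ OPF S ∧
  ∃ n : ℕ, n ≤ k ∧ ∃ C : Fin n → Set E3,
    (∀ i, C i ⊆ sphere2 ∧ SphConvex (C i)) ∧
    (Pairwise fun i j => closure (C i) ∩ closure (C j) = ∅) ∧
    S = ⋃ i, C i

/-- Azimuthal angle of the (p₁,p₂) components of a point. -/
def azimuth (p : E3) : ℝ := Complex.arg ((p 0 : ℂ) + (p 1 : ℂ) * Complex.I)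

/-- The azimuthal angle lies in [a,b] modulo 2π. -/
def azIn (p : E3) (a b : ℝ) : Prop :=
  ∃ m : ℤ, a ≤ azimuth p + 2 * Real.pi * (m : ℝ) ∧ azimuth p + 2 * Real.pi * (m : ℝ) ≤ b

/-- The level-k dyadic cell with indices i, j. -/
def dyadicCell (k i j : ℕ) : Set E3 :=
  {p ∈ sphere2 |
    ((i : ℝ) * (2 : ℝ)⁻¹ ^ k - 1 ≤ p 2 ∧ p 2 ≤ ((i : ℝ) + 1) * (2 : ℝ)⁻¹ ^ k - 1) ∧
    azIn p (Real.pi / 2 + (j : ℝ) * Real.pi * (2 : ℝ)⁻¹ ^ k)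
           (Real.pi / 2 + ((j : ℝ) + 1) * Real.pi * (2 : ℝ)⁻¹ ^ k)}

/-- c is a level-k dyadic cell. -/
def IsDyadicCell (k : ℕ) (c : Set E3) : Prop :=
  ∃ i j : ℕ, i < 2 ^ (k + 1) ∧ j < 2 ^ (k + 1) ∧ c = dyadicCell k i j

/-- Interior of c relative to 𝕊². -/
def relInterior (c : Set E3) : Set E3 :=
  {x ∈ sphere2 | ∃ U : Set E3, IsOpen U ∧ x ∈ U ∧ U ∩ sphere2 ⊆ c}

/-- Boundary of c relative to 𝕊². -/
def relBd (c : Set E3) : Set E3 := closure c ∩ closure (sphere2 \ c)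

/-- ℬ: orthogonal-pair-free finite unions of pairwise almost disjoint dyadic cells. -/
def memB (S : Set E3) : Prop :=
  OPF S ∧
  ∃ (n : ℕ) (lev : Fin n → ℕ) (c : Fin n → Set E3),
    (∀ i, IsDyadicCell (lev i) (c i)) ∧
    (Pairwise fun i j => relInterior (c i) ∩ relInterior (c j) = ∅) ∧
    S = ⋃ i, c i

/-- The great circle polar to y. -/
def polarGC (y : E3) : Set E3 := {z ∈ sphere2 | rinner y z = 0}

/-- G(M) = ⋃_{y ∈ M} G(y). -/
def GM (M : Set E3) : Set E3 := ⋃ y ∈ M, polarGC y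

/-- M₁ = {z ∈ 𝕊² : G(z) ⊆ G(M)}. -/
def Mone (M : Set E3) : Set E3 := {z ∈ sphere2 | polarGC z ⊆ GM M}

/-- M₂ = M₁ \ G(M). -/
def Mtwo (M : Set E3) : Set E3 := Mone M \ GM M

/-- x ∼ y: joined by a finite piecewise-geodesic path inside A. -/
def chainRel (A : Set E3) (x y : E3) : Prop :=
  ∃ (m : ℕ) (s : ℕ → E3), s 0 = x ∧ s m = y ∧
    ∀ l, l < m → s l ≠ -s (l + 1) ∧ arc (s l) (s (l + 1)) ⊆ A

/-- Hausdorff distance with respect to the geodesic metric. -/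
def geoHausdorff (U V : Set E3) : ℝ :=
  max (⨆ x ∈ U, gdistToSet x V) (⨆ y ∈ V, gdistToSet y U)

/-- Geodesic distance between two sets. -/
def gsetDist (A B : Set E3) : ℝ := sInf (Set.image2 gdist A B)

lemma rinner_self_of_mem_sphere2 {y : E3} (hy : y ∈ sphere2) : rinner y y = 1 := by
  rw [rinner, real_inner_self_eq_norm_sq, mem_sphere_zero_iff_norm.mp hy, one_pow]

lemma notMem_polarGC_self {y : E3} (hy : y ∈ sphere2) : y ∉ polarGC y := fun h =>
  one_ne_zero ((rinner_self_of_mem_sphere2 hy).symm.trans h.2)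

lemma polarGC_subset_GM {M : Set E3} {y : E3} (hy : y ∈ M) : polarGC y ⊆ GM M :=
  subset_biUnion_of_mem hy

lemma subset_Mone {M : Set E3} (hM : M ⊆ sphere2) : M ⊆ Mone M := fun _ hy =>
  ⟨hM hy, polarGC_subset_GM hy⟩

lemma notMem_GM_of_OPF {M : Set E3} (hM : M ⊆ sphere2) (hOPF : OPF M) {y : E3} (hy : y ∈ M) :
    y ∉ GM M := by
  simp only [GM, mem_iUnion₂, not_exists]
  intro z hz hyz
  obtain rfl | hne := eq_or_ne z y
  · exact notMem_polarGC_self (hM hy) hyz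
  · exact hOPF z hz y hy hne hyz.2

lemma OPF_Mtwo (M : Set E3) : OPF (Mtwo M) := fun _ hp _ hq _ hpq =>
  hq.2 (hp.1.2 ⟨hq.1.1, hpq⟩)

/-- M ⊆ M₂ and M₂ is orthogonal-pair-free. -/
theorem stmt8 (M : Set E3) (hM : M ⊆ sphere2) (hOPF : OPF M) :
    M ⊆ Mtwo M ∧ OPF (Mtwo M) :=
  ⟨fun _ hy => ⟨subset_Mone hM hy, notMem_GM_of_OPF hM hOPF hy⟩, OPF_Mtwo M⟩

end
end

section
/- (Triangle lemma) Let M ⊆ 𝕊² be an orthogonal-pair-free set, and define G(M) = ⋃_{y∈M} G(y), M₁ = {z ∈ 𝕊² : G(z) ⊆ G(M)}, M₂ = M₁ \ G(M). Let x, y, z be three distinct points of M₂ such that arc(x,y) ⊆ M₂ and arc(y,z) ⊆ M₂. Then (1) arc(x,z) ⊆ M₂, and (2) d(x,y) < π/2, d(y,z) < π/2, and d(x,z) < π/2. -/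
open Metric Set MeasureTheory Filter
open scoped ENNReal Topology

noncomputable section

/-!
If `G(p) ⊆ G(M)`, then `⟨p, ·⟩` has no zero on `M₂`. Since `⟨p, ·⟩` vanishes somewhere on
`arc(a,b)` as soon as `⟨p,a⟩⟨p,b⟩ ≤ 0`, it has a constant sign along `arc(x,y)` and `arc(y,z)`,
hence `⟨p,x⟩⟨p,z⟩ > 0`; for `p = x, y` this gives the three acute distances. Conversely, a point `w` of
`arc(x,z)` orthogonal to some `p` forces `⟨p,x⟩⟨p,z⟩ ≤ 0`, so `p` is orthogonal to a point `q` of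
`arc(x,y) ∪ arc(y,z) ⊆ M₂`. Taking `p ∈ M` contradicts `q ∉ G(M)`, so `w ∉ G(M)`; taking
`p ∈ G(w)` gives `p ∈ G(q) ⊆ G(M)`, so `w ∈ M₁`.
-/

lemma rinner_comm (p q : E3) : rinner p q = rinner q p := real_inner_comm q p

lemma rinner_smul_right (p u : E3) (c : ℝ) : rinner p (c • u) = c * rinner p u :=
  real_inner_smul_right p u c

lemma rinner_add_right (p u v : E3) : rinner p (u + v) = rinner p u + rinner p v :=
  inner_add_right p u v

lemma exists_mem_arc_rinner_eq_zero {p a b : E3} (h : rinner p a * rinner p b ≤ 0) :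
    ∃ q ∈ arc a b, rinner p q = 0 := by
  set A := rinner p a
  set B := rinner p b
  rcases (add_nonneg (abs_nonneg B) (abs_nonneg A)).eq_or_lt with hs | hs
  · have hA : A = 0 := abs_eq_zero.1 ((add_eq_zero_iff_of_nonneg (abs_nonneg B)
      (abs_nonneg A)).1 hs.symm).2
    exact ⟨‖a‖⁻¹ • a, ⟨a, left_mem_segment ℝ a b, rfl⟩, by
      rw [rinner_smul_right]; exact mul_eq_zero_of_right _ hA⟩
  · -- the zero of `⟨p, ·⟩` on `[a, b]` is at `|B| • a + |A| • b`, up to scaling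
    have hAB : |B| * A + |A| * B = 0 := by
      rcases le_total 0 A with hA | hA <;> rcases le_total 0 B with hB | hB <;>
        simp only [abs_of_nonneg, abs_of_nonpos, hA, hB] <;> nlinarith
    set u := (|B| / (|B| + |A|)) • a + (|A| / (|B| + |A|)) • b
    have hu : u ∈ segment ℝ a b :=
      mem_segment_iff_div.2 ⟨|B|, |A|, abs_nonneg _, abs_nonneg _, hs, rfl⟩
    refine ⟨‖u‖⁻¹ • u, ⟨u, hu, rfl⟩, ?_⟩
    have hpu : rinner p u = 0 := by
      simp only [u, rinner_add_right, rinner_smul_right]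
      rw [div_mul_eq_mul_div, div_mul_eq_mul_div, ← add_div, hAB, zero_div]
    rw [rinner_smul_right, hpu, mul_zero]

lemma exists_mem_arc_union_rinner_eq_zero {p a c : E3} (b : E3)
    (h : rinner p a * rinner p c ≤ 0) : ∃ q ∈ arc a b ∪ arc b c, rinner p q = 0 := by
  have : rinner p a * rinner p b ≤ 0 ∨ rinner p b * rinner p c ≤ 0 := by
    by_contra! hpos
    nlinarith [mul_pos hpos.1 hpos.2, mul_nonpos_of_nonpos_of_nonneg h (sq_nonneg (rinner p b))]
  rcases this with hab | hbc
  · obtain ⟨q, hq, hpq⟩ := exists_mem_arc_rinner_eq_zero hab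
    exact ⟨q, Or.inl hq, hpq⟩
  · obtain ⟨q, hq, hpq⟩ := exists_mem_arc_rinner_eq_zero hbc
    exact ⟨q, Or.inr hq, hpq⟩

lemma rinner_mul_rinner_nonpos_of_mem_arc {p a b w : E3} (hw : w ∈ arc a b) (hw0 : w ≠ 0)
    (hpw : rinner p w = 0) : rinner p a * rinner p b ≤ 0 := by
  obtain ⟨u, ⟨α, γ, hα, hγ, hαγ, rfl⟩, rfl⟩ := hw
  have hu : ‖α • a + γ • b‖⁻¹ ≠ 0 := fun h => hw0 (by simp only [h, zero_smul])
  simp only [rinner_smul_right, rinner_add_right] at hpw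
  have hcomb := (mul_eq_zero.1 hpw).resolve_left hu
  set A := rinner p a
  set B := rinner p b
  have : A * B = -(α * A ^ 2 + γ * B ^ 2) := by linear_combination (A + B) * hcomb - A * B * hαγ
  nlinarith [mul_nonneg hα (sq_nonneg A), mul_nonneg hγ (sq_nonneg B)]

lemma arc_subset_sphere2_of_rinner_pos {a b : E3} (hab : 0 < rinner a b) : arc a b ⊆ sphere2 := by
  rintro _ ⟨u, ⟨α, γ, hα, hγ, hαγ, rfl⟩, rfl⟩
  -- `⟨a + b, u⟩ ≥ (α + γ) ⟨a, b⟩ > 0`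
  have hu : 0 < inner ℝ (a + b) (α • a + γ • b) := by
    simp only [rinner] at hab
    simp only [inner_add_left, inner_add_right, real_inner_smul_right, real_inner_comm a b]
    nlinarith [mul_nonneg hα (real_inner_self_nonneg (x := a)),
      mul_nonneg hγ (real_inner_self_nonneg (x := b))]
  have hu0 : α • a + γ • b ≠ 0 := by
    intro h
    rw [h, inner_zero_right] at hu
    exact lt_irrefl 0 hu
  exact mem_sphere_zero_iff_norm.2 (norm_smul_inv_norm (𝕜 := ℝ) hu0)

lemma rinner_ne_zero_of_mem_Mtwo {M : Set E3} {p q : E3} (hp : polarGC p ⊆ GM M)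
    (hq : q ∈ Mtwo M) : rinner p q ≠ 0 :=
  fun h => hq.2 (hp ⟨hq.1.1, h⟩)

section

variable {S : Set E3} {a b c : E3}

lemma rinner_pos_of_arc_subset (hS : ∀ q ∈ S, rinner a q ≠ 0) (h : arc a b ⊆ S) :
    0 < rinner a b := by
  by_contra! hab
  obtain ⟨q, hq, haq⟩ :=
    exists_mem_arc_rinner_eq_zero (mul_nonpos_of_nonneg_of_nonpos real_inner_self_nonneg hab)
  exact hS q (h hq) haq

lemma rinner_pos_of_arc_union_subset (hS : ∀ q ∈ S, rinner a q ≠ 0) (h₁ : arc a b ⊆ S)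
    (h₂ : arc b c ⊆ S) : 0 < rinner a c := by
  by_contra! hac
  obtain ⟨q, hq, haq⟩ := exists_mem_arc_union_rinner_eq_zero b
    (mul_nonpos_of_nonneg_of_nonpos real_inner_self_nonneg hac)
  exact hS q (union_subset h₁ h₂ hq) haq

end

lemma arc_subset_Mtwo {M : Set E3} {x y z : E3} (hxz : 0 < rinner x z)
    (h₁ : arc x y ⊆ Mtwo M) (h₂ : arc y z ⊆ Mtwo M) : arc x z ⊆ Mtwo M := by
  intro w hw
  have hwS : w ∈ sphere2 := arc_subset_sphere2_of_rinner_pos hxz hw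
  have hchain : ∀ p, rinner p w = 0 → ∃ q ∈ Mtwo M, rinner p q = 0 := fun p hpw =>
    have ⟨q, hq, hpq⟩ := exists_mem_arc_union_rinner_eq_zero y
      (rinner_mul_rinner_nonpos_of_mem_arc hw (ne_of_mem_sphere hwS one_ne_zero) hpw)
    ⟨q, union_subset h₁ h₂ hq, hpq⟩
  refine ⟨⟨hwS, ?_⟩, ?_⟩
  · rintro p ⟨hpS, hwp⟩
    obtain ⟨q, hq, hpq⟩ := hchain p (by rwa [rinner_comm])
    exact hq.1.2 ⟨hpS, by rwa [rinner_comm]⟩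
  · intro hwM
    obtain ⟨m, hm, -, hmw⟩ := mem_iUnion₂.1 hwM
    obtain ⟨q, hq, hmq⟩ := hchain m hmw
    exact rinner_ne_zero_of_mem_Mtwo (subset_biUnion_of_mem (u := polarGC) hm) hq hmq

theorem stmt10_general (M : Set E3)
    (x y z : E3) (hx : x ∈ Mtwo M) (hy : y ∈ Mtwo M)
    (h1 : arc x y ⊆ Mtwo M) (h2 : arc y z ⊆ Mtwo M) :
    arc x z ⊆ Mtwo M ∧
    gdist x y < Real.pi / 2 ∧ gdist y z < Real.pi / 2 ∧ gdist x z < Real.pi / 2 := by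
  have hxM : ∀ q ∈ Mtwo M, rinner x q ≠ 0 := fun _ => rinner_ne_zero_of_mem_Mtwo hx.1.2
  have hyM : ∀ q ∈ Mtwo M, rinner y q ≠ 0 := fun _ => rinner_ne_zero_of_mem_Mtwo hy.1.2
  have hxz : 0 < rinner x z := rinner_pos_of_arc_union_subset hxM h1 h2
  exact ⟨arc_subset_Mtwo hxz h1 h2,
    Real.arccos_lt_pi_div_two.2 (rinner_pos_of_arc_subset hxM h1),
    Real.arccos_lt_pi_div_two.2 (rinner_pos_of_arc_subset hyM h2),
    Real.arccos_lt_pi_div_two.2 hxz⟩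

/-- Triangle lemma. -/
theorem stmt10 (M : Set E3) (hM : M ⊆ sphere2) (hOPF : OPF M)
    (x y z : E3) (hx : x ∈ Mtwo M) (hy : y ∈ Mtwo M) (hz : z ∈ Mtwo M)
    (hxy : x ≠ y) (hyz : y ≠ z) (hxz : x ≠ z)
    (h1 : arc x y ⊆ Mtwo M) (h2 : arc y z ⊆ Mtwo M) :
    arc x z ⊆ Mtwo M ∧
    gdist x y < Real.pi / 2 ∧ gdist y z < Real.pi / 2 ∧ gdist x z < Real.pi / 2 :=
  stmt10_general M x y z hx hy h1 h2
end
end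

section
/- Let k ≥ 1. For each j ∈ ℕ, let C_j¹, …, C_jᵏ be nonempty closed spherically convex subsets of 𝕊² whose union M_j = ⋃_{i=1}^{k} C_jⁱ is orthogonal-pair-free. Let C*¹, …, C*ᵏ be nonempty closed spherically convex subsets of 𝕊² with δ_H(C_jⁱ, C*ⁱ) → 0 as j → ∞ for every 1 ≤ i ≤ k. Then the set ⋃_{i=1}^{k} int(C*ⁱ) is orthogonal-pair-free, where int denotes interior relative to 𝕊². -/
open Metric Set MeasureTheory Filter
open scoped ENNReal Topology

noncomputable section

/-! Suppose `p ∈ int C*ᵃ` and `q ∈ int C*ᵇ` are orthogonal. Rotating `p` slightly towards `q` and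
towards `-q` gives two points of `C*ᵃ` strictly on opposite sides of the great circle polar to `q`.
Hausdorff convergence moves these two points and `q` to nearby points of `C_jᵃ` and `C_jᵇ` without
changing any of the relevant signs. By convexity of `C_jᵃ`, the arc joining the first two lies in
`C_jᵃ`, and by the intermediate value theorem it meets the circle polar to the third point, giving
an orthogonal pair in `M_j`. -/

section InnerProductSpace

variable {F : Type*} [NormedAddCommGroup F] [InnerProductSpace ℝ F]

lemma abs_inner_sub_inner_le {x x' y y' : F} (hx : ‖x‖ ≤ 1) (hy' : ‖y'‖ ≤ 1) :
    |inner ℝ x' y' - inner ℝ x y| ≤ ‖x' - x‖ + ‖y' - y‖ := by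
  have hsplit : inner ℝ x' y' - inner ℝ x y = inner ℝ (x' - x) y' + inner ℝ x (y' - y) := by
    simp only [inner_sub_left, inner_sub_right]; ring
  have h₁ := abs_real_inner_le_norm (x' - x) y'
  have h₂ := abs_real_inner_le_norm x (y' - y)
  rw [hsplit]
  calc _ ≤ |inner ℝ (x' - x) y'| + |inner ℝ x (y' - y)| := abs_add_le _ _
    _ ≤ ‖x' - x‖ * ‖y'‖ + ‖x‖ * ‖y' - y‖ := add_le_add h₁ h₂
    _ ≤ ‖x' - x‖ + ‖y' - y‖ :=
      add_le_add (mul_le_of_le_one_right (norm_nonneg _) hy')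
        (mul_le_of_le_one_left (norm_nonneg _) hx)

lemma inner_signs_of_norm_sub_lt {u u' q x x' y : F} {m : ℝ} (hu : ‖u‖ ≤ 1) (hu' : ‖u'‖ ≤ 1)
    (hx' : ‖x'‖ ≤ 1) (hy : ‖y‖ ≤ 1) (huq : m ≤ inner ℝ u q) (hu'q : inner ℝ u' q ≤ -m)
    (huu' : m ≤ inner ℝ u u') (hxu : ‖x - u‖ < m / 4) (hx'u' : ‖x' - u'‖ < m / 4)
    (hyq : ‖y - q‖ < m / 4) : 0 < inner ℝ x y ∧ inner ℝ x' y < 0 ∧ 0 < inner ℝ x x' := by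
  have hxy := abs_le.mp (abs_inner_sub_inner_le (x' := x) (y := q) hu hy)
  have hx'y := abs_le.mp (abs_inner_sub_inner_le (x' := x') (y := q) hu' hy)
  have hxx' := abs_le.mp (abs_inner_sub_inner_le (x' := x) (y := u') hu hx')
  refine ⟨?_, ?_, ?_⟩ <;> linarith

lemma zero_notMem_segment_of_norm_eq {x y : F} (hxy : ‖x‖ = ‖y‖) (hne : x ≠ -y) :
    (0 : F) ∉ segment ℝ x y := by
  rw [mem_segment_iff_sameRay, zero_sub, sub_zero]
  intro hray
  exact hne (neg_eq_iff_eq_neg.mp (hray.eq_of_norm_eq (by rw [norm_neg, hxy])))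

lemma inner_cos_smul_add_sin_smul {p q : F} (hp : ‖p‖ = 1) (hq : ‖q‖ = 1)
    (hpq : inner ℝ p q = 0) (s s' : ℝ) :
    inner ℝ (Real.cos s • p + Real.sin s • q) (Real.cos s' • p + Real.sin s' • q) =
      Real.cos (s - s') := by
  have hqp : inner ℝ q p = 0 := by rw [real_inner_comm]; exact hpq
  simp only [inner_add_left, inner_add_right, real_inner_smul_left, real_inner_smul_right,
    real_inner_self_eq_norm_sq, hp, hq, hpq, hqp, Real.cos_sub]
  ring

end InnerProductSpace

lemma norm_eq_one_of_mem_sphere2 {p : E3} (hp : p ∈ sphere2) : ‖p‖ = 1 := by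
  simpa [sphere2] using hp

lemma mem_of_mem_relInterior {A : Set E3} {p : E3} (hp : p ∈ relInterior A) : p ∈ A := by
  obtain ⟨hpS, U, -, hpU, hUA⟩ := hp
  exact hUA ⟨hpU, hpS⟩

lemma norm_sub_le_gdist {y z : E3} (hy : ‖y‖ = 1) (hz : ‖z‖ = 1) : ‖y - z‖ ≤ gdist y z := by
  have hbound := abs_real_inner_le_norm y z
  rw [hy, hz, one_mul] at hbound
  have hcos : Real.cos (gdist y z) = rinner y z :=
    Real.cos_arccos (abs_le.mp hbound).1 (abs_le.mp hbound).2
  have hchord : ‖y - z‖ ^ 2 = 2 - 2 * rinner y z := by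
    rw [norm_sub_sq_real, hy, hz, rinner]; ring
  have := Real.one_sub_sq_div_two_le_cos (x := gdist y z)
  have hθ : 0 ≤ gdist y z := Real.arccos_nonneg _
  exact (pow_le_pow_iff_left₀ (norm_nonneg _) hθ two_ne_zero).mp (by linarith)

lemma gdistToSet_le_geoHausdorff {B K : Set E3} (hB : B.Nonempty) {y : E3} (hy : y ∈ K) :
    gdistToSet y B ≤ geoHausdorff B K := by
  obtain ⟨z, hz⟩ := hB
  have hle_pi : ∀ w, gdistToSet w B ≤ Real.pi := by
    intro w
    have hbdd : BddBelow (gdist w '' B) := ⟨0, by rintro _ ⟨v, _, rfl⟩; exact Real.arccos_nonneg _⟩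
    exact (csInf_le hbdd ⟨z, hz, rfl⟩).trans (Real.arccos_le_pi _)
  have hbdd : BddAbove (⋃ w, range fun _ : w ∈ K => gdistToSet w B) :=
    ⟨Real.pi, by simp only [mem_upperBounds, mem_iUnion, mem_range]; grind⟩
  exact (le_ciSup₂ (f := fun w (_ : w ∈ K) => gdistToSet w B) hbdd y hy).trans
    (le_max_right _ _)

lemma exists_gdist_lt_of_gdistToSet_lt {B : Set E3} (hB : B.Nonempty) {y : E3} {d : ℝ}
    (h : gdistToSet y B < d) : ∃ z ∈ B, gdist y z < d := by
  obtain ⟨_, ⟨z, hz, rfl⟩, hlt⟩ := exists_lt_of_csInf_lt (hB.image _) h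
  exact ⟨z, hz, hlt⟩

lemma eventually_exists_norm_sub_lt {C : ℕ → Set E3} {K : Set E3}
    (hC : ∀ j, (C j).Nonempty ∧ C j ⊆ sphere2)
    (hconv : Tendsto (fun j => geoHausdorff (C j) K) atTop (𝓝 0))
    {x : E3} (hxK : x ∈ K) (hx : ‖x‖ = 1) {ε : ℝ} (hε : 0 < ε) :
    ∀ᶠ j in atTop, ∃ y ∈ C j, ‖y - x‖ < ε := by
  filter_upwards [hconv.eventually (gt_mem_nhds hε)] with j hj
  obtain ⟨y, hy, hxy⟩ := exists_gdist_lt_of_gdistToSet_lt (hC j).1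
    ((gdistToSet_le_geoHausdorff (hC j).1 hxK).trans_lt hj)
  refine ⟨y, hy, ?_⟩
  rw [norm_sub_rev]
  exact (norm_sub_le_gdist hx (norm_eq_one_of_mem_sphere2 ((hC j).2 hy))).trans_lt hxy

lemma mem_arc_left {x y : E3} (hx : ‖x‖ = 1) : x ∈ arc x y :=
  ⟨x, left_mem_segment ℝ x y, by simp [hx]⟩

lemma mem_arc_right {x y : E3} (hy : ‖y‖ = 1) : y ∈ arc x y :=
  ⟨y, right_mem_segment ℝ x y, by simp [hy]⟩

lemma isPreconnected_arc {x y : E3} (hxy : ‖x‖ = ‖y‖) (hne : x ≠ -y) :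
    IsPreconnected (arc x y) := by
  refine (convex_segment x y).isPreconnected.image _ ?_
  refine ContinuousOn.smul (ContinuousOn.inv₀ continuousOn_id.norm fun u hu => ?_) continuousOn_id
  exact norm_ne_zero_iff.mpr fun h => zero_notMem_segment_of_norm_eq hxy hne (h ▸ hu)

lemma SphConvex.exists_inner_eq_zero {S : Set E3} (hS : SphConvex S) {x y q : E3}
    (hx : x ∈ S) (hy : y ∈ S) (hx1 : ‖x‖ = 1) (hy1 : ‖y‖ = 1) (hxy : 0 < rinner x y)
    (hxq : 0 ≤ rinner x q) (hyq : rinner y q ≤ 0) : ∃ p ∈ S, rinner p q = 0 := by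
  have hne : x ≠ -y := by
    rintro rfl
    rw [rinner, inner_neg_left, real_inner_self_eq_norm_sq, hy1] at hxy
    linarith
  obtain ⟨p, hp, hpq⟩ := (isPreconnected_arc (hx1.trans hy1.symm) hne).intermediate_value
    (mem_arc_right hy1) (mem_arc_left hx1) (f := fun p => rinner p q)
    (continuous_id.inner continuous_const).continuousOn ⟨hyq, hxq⟩
  exact ⟨p, hS x hx y hy hne hp, hpq⟩

lemma exists_inner_pos_neg_of_mem_relInterior {A : Set E3} {p q : E3} (hp : p ∈ relInterior A)
    (hq : ‖q‖ = 1) (hpq : rinner p q = 0) :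
    ∃ u ∈ A, ∃ u' ∈ A, ‖u‖ = 1 ∧ ‖u'‖ = 1 ∧ ∃ m > 0,
      m ≤ rinner u q ∧ rinner u' q ≤ -m ∧ m ≤ rinner u u' := by
  obtain ⟨hpS, U, hU, hpU, hUA⟩ := hp
  have hp1 := norm_eq_one_of_mem_sphere2 hpS
  set γ : ℝ → E3 := fun s => Real.cos s • p + Real.sin s • q
  have hγ : ∀ s s', rinner (γ s) (γ s') = Real.cos (s - s') :=
    inner_cos_smul_add_sin_smul hp1 hq hpq
  have hγq : ∀ s, rinner (γ s) q = Real.sin s := fun s => by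
    simpa [γ, Real.cos_sub_pi_div_two] using hγ s (Real.pi / 2)
  have hγ1 : ∀ s, ‖γ s‖ = 1 := fun s => by
    have := hγ s s
    rw [sub_self, Real.cos_zero, rinner, real_inner_self_eq_norm_sq] at this
    nlinarith [norm_nonneg (γ s)]
  have hγA : ∀ s, γ s ∈ U → γ s ∈ A := fun s hs =>
    hUA ⟨hs, by simp [sphere2, hγ1 s]⟩
  have hγcont : Continuous γ := by fun_prop
  obtain ⟨r, hr, hball⟩ := Metric.isOpen_iff.mp (hU.preimage hγcont) 0 (by simpa [γ] using hpU)
  set t := min (r / 2) (Real.pi / 8)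
  have ht : 0 < t := lt_min (by linarith) (by positivity)
  have hball_t : ∀ s, |s| = t → γ s ∈ U := fun s hs => hball (by
    rw [mem_ball, Real.dist_eq, sub_zero, hs]; linarith [min_le_left (r / 2) (Real.pi / 8)])
  have hsin : 0 < Real.sin t :=
    Real.sin_pos_of_pos_of_lt_pi ht (by linarith [min_le_right (r / 2) (Real.pi / 8), Real.pi_pos])
  have hcos : 0 < Real.cos (t - -t) := Real.cos_pos_of_mem_Ioo
    ⟨by linarith [Real.pi_pos], by linarith [min_le_right (r / 2) (Real.pi / 8), Real.pi_pos]⟩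
  refine ⟨γ t, hγA t (hball_t t (abs_of_pos ht)), γ (-t),
    hγA (-t) (hball_t (-t) (by simp [ht.le])), hγ1 t, hγ1 (-t),
    min (Real.sin t) (Real.cos (t - -t)), lt_min hsin hcos, ?_, ?_, ?_⟩
  · rw [hγq]; exact min_le_left _ _
  · rw [hγq, Real.sin_neg, neg_le_neg_iff]; exact min_le_left _ _
  · rw [hγ]; exact min_le_right _ _

theorem stmt19_general (k : ℕ) (C : ℕ → Fin k → Set E3)
    (hC : ∀ j i, (C j i).Nonempty ∧ IsClosed (C j i) ∧ C j i ⊆ sphere2 ∧ SphConvex (C j i))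
    (hOPF : ∀ j, OPF (⋃ i, C j i))
    (Cstar : Fin k → Set E3)
    (hconv : ∀ i, Filter.Tendsto (fun j => geoHausdorff (C j i) (Cstar i))
      Filter.atTop (nhds 0)) :
    OPF (⋃ i, relInterior (Cstar i)) := by
  intro p hp q hq _ hpq
  obtain ⟨a, hpa⟩ := mem_iUnion.mp hp
  obtain ⟨b, hqb⟩ := mem_iUnion.mp hq
  have hq1 := norm_eq_one_of_mem_sphere2 hqb.1
  obtain ⟨u, hu, u', hu', hu1, hu'1, m, hm, huq, hu'q, huu'⟩ :=
    exists_inner_pos_neg_of_mem_relInterior hpa hq1 hpq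
  have happrox := fun i {x} (hx : x ∈ Cstar i) (hx1 : ‖x‖ = 1) =>
    eventually_exists_norm_sub_lt (fun j => ⟨(hC j i).1, (hC j i).2.2.1⟩) (hconv i) hx hx1
      (by positivity : 0 < m / 4)
  obtain ⟨j, ⟨uj, huj, hujd⟩, ⟨u'j, hu'j, hu'jd⟩, ⟨qj, hqj, hqjd⟩⟩ := ((happrox a hu hu1).and
    ((happrox a hu' hu'1).and (happrox b (mem_of_mem_relInterior hqb) hq1))).exists
  have hC1 {i x} (hx : x ∈ C j i) : ‖x‖ = 1 := norm_eq_one_of_mem_sphere2 ((hC j i).2.2.1 hx)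
  obtain ⟨hujqj, hu'jqj, huju'j⟩ := inner_signs_of_norm_sub_lt hu1.le hu'1.le (hC1 hu'j).le
    (hC1 hqj).le huq hu'q huu' hujd hu'jd hqjd
  obtain ⟨p₀, hp₀, hp₀q⟩ := (hC j a).2.2.2.exists_inner_eq_zero huj hu'j (hC1 huj) (hC1 hu'j)
    huju'j hujqj.le hu'jqj.le
  refine hOPF j p₀ (mem_iUnion.mpr ⟨a, hp₀⟩) qj (mem_iUnion.mpr ⟨b, hqj⟩) ?_ hp₀q
  rintro rfl
  rw [rinner, real_inner_self_eq_norm_sq, hC1 hqj] at hp₀q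
  norm_num at hp₀q

/-- the union of the relative interiors of the Hausdorff limits is
orthogonal-pair-free, provided each approximating union is. -/
theorem stmt19 (k : ℕ) (hk : 1 ≤ k) (C : ℕ → Fin k → Set E3)
    (hC : ∀ j i, (C j i).Nonempty ∧ IsClosed (C j i) ∧ C j i ⊆ sphere2 ∧ SphConvex (C j i))
    (hOPF : ∀ j, OPF (⋃ i, C j i))
    (Cstar : Fin k → Set E3)
    (hCs : ∀ i, (Cstar i).Nonempty ∧ IsClosed (Cstar i) ∧ Cstar i ⊆ sphere2 ∧ SphConvex (Cstar i))
    (hconv : ∀ i, Filter.Tendsto (fun j => geoHausdorff (C j i) (Cstar i))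
      Filter.atTop (nhds 0)) :
    OPF (⋃ i, relInterior (Cstar i)) :=
  stmt19_general k C hC hOPF Cstar hconv
end
end
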